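/- For any non-negative integers c_1,…,c_m, the change of f over the cylinder Δ^E_{c_1…c_m}, namely μ_f(Δ^E_{c_1…c_m}) := f(Δ^E_{c_1…c_m(0)}) − f(Δ^E_{c_1…c_{m−1}[c_m+1](0)}) (the value of f at the right endpoint minus its value at the left endpoint of the cylinder), equals ∏_{i=1}^m u_{c_i}. -/

import Mathlib

/-!
Once the Engel digits of a point vanish from some index on, the series defining `f` has a
geometric tail with ratio `u₀`, and `r₀ = 1 - u₀` makes that tail collapse: `f` at such a point
is the finite expression `∑_{k<M} r_{c_k} ∏_{i<k} u_{c_i} + (∏_{i<M} u_{c_i}) · r_{d-1}` in its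
digits `c₀, …, c_{M-1}, d, 0, 0, …`. The two endpoints of the cylinder differ only in the last
digit `d ∈ {c_M, c_M + 1}`, and `r_{c_M - 1} - r_{c_M} = u_{c_M}`.
-/

open scoped BigOperators

/-- The value `Δ^E_g` of the Engel series with digit sequence `g`
(`g n` is the paper's `g_{n+1}`). -/
noncomputable def engelSum (g : ℕ → ℕ) : ℝ :=
  ∑' n : ℕ, ∏ k ∈ Finset.range (n + 1),
    ((2 : ℝ) + ∑ i ∈ Finset.range (k + 1), (g i : ℝ))⁻¹

/-- The value of the series `r_{g_1} + ∑_{k≥2} r_{g_k} ∏_{i=1}^{k-1} u_{g_i}`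
defining `f` on the digit sequence `g`. -/
noncomputable def fSeries (u r : ℕ → ℝ) (g : ℕ → ℕ) : ℝ :=
  r (g 0) + ∑' k : ℕ, r (g (k + 1)) * ∏ i ∈ Finset.range (k + 1), u (g i)

/-- `rpred r n = r (n-1)`, with the convention `r (-1) = 1`. -/
noncomputable def rpred (r : ℕ → ℝ) (n : ℕ) : ℝ := if n = 0 then 1 else r (n - 1)

open Finset

lemma engelSum_term_pos (g : ℕ → ℕ) (n : ℕ) :
    0 < ∏ k ∈ range (n + 1), ((2 : ℝ) + ∑ i ∈ range (k + 1), (g i : ℝ))⁻¹ :=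
  prod_pos fun _ _ => by positivity

lemma engelSum_term_le (g : ℕ → ℕ) (n : ℕ) :
    ∏ k ∈ range (n + 1), ((2 : ℝ) + ∑ i ∈ range (k + 1), (g i : ℝ))⁻¹ ≤ 2⁻¹ * 2⁻¹ ^ n := by
  calc ∏ k ∈ range (n + 1), ((2 : ℝ) + ∑ i ∈ range (k + 1), (g i : ℝ))⁻¹
      ≤ ∏ _k ∈ range (n + 1), (2 : ℝ)⁻¹ :=
        prod_le_prod (fun _ _ => by positivity) fun _ _ =>
          inv_anti₀ two_pos (le_add_of_nonneg_right (by positivity))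
    _ = 2⁻¹ * 2⁻¹ ^ n := by rw [prod_const, card_range, pow_succ']

lemma engelSum_mem_Ioc (g : ℕ → ℕ) : engelSum g ∈ Set.Ioc (0 : ℝ) 1 := by
  have hgeom : Summable fun n : ℕ => (2 : ℝ)⁻¹ * 2⁻¹ ^ n :=
    (summable_geometric_of_lt_one (by norm_num) (by norm_num)).mul_left _
  have hsum := hgeom.of_nonneg_of_le (fun n => (engelSum_term_pos g n).le) (engelSum_term_le g)
  refine ⟨hsum.tsum_pos (fun n => (engelSum_term_pos g n).le) 0 (engelSum_term_pos g 0), ?_⟩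
  calc engelSum g ≤ ∑' n : ℕ, (2 : ℝ)⁻¹ * 2⁻¹ ^ n := hsum.tsum_le_tsum (engelSum_term_le g) hgeom
    _ = 1 := by rw [tsum_mul_left, tsum_geometric_inv_two]; norm_num

noncomputable def fSeriesTerm (u r : ℕ → ℝ) (g : ℕ → ℕ) (k : ℕ) : ℝ :=
  r (g k) * ∏ i ∈ range k, u (g i)

lemma fSeriesTerm_congr {u r : ℕ → ℝ} {g g' : ℕ → ℕ} {k : ℕ} (h : ∀ i ≤ k, g i = g' i) :
    fSeriesTerm u r g k = fSeriesTerm u r g' k := by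
  unfold fSeriesTerm
  rw [h k le_rfl, prod_congr rfl fun i hi => by rw [h i (mem_range.1 hi).le]]

section

variable {u r : ℕ → ℝ}

lemma fSeries_eq_tsum (g : ℕ → ℕ) (hs : Summable (fSeriesTerm u r g)) :
    fSeries u r g = ∑' k, fSeriesTerm u r g k := by
  rw [hs.tsum_eq_zero_add, fSeries]
  simp [fSeriesTerm]

lemma hasSum_fSeriesTerm_of_eventually_zero (hr0 : r 0 = 1 - u 0) (hu0 : |u 0| < 1)
    {g : ℕ → ℕ} {m : ℕ} (hg : ∀ n, m ≤ n → g n = 0) :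
    HasSum (fSeriesTerm u r g)
      (∑ k ∈ range m, fSeriesTerm u r g k + ∏ i ∈ range m, u (g i)) := by
  set P := ∏ i ∈ range m, u (g i)
  have htail : ∀ j, fSeriesTerm u r g (j + m) = r 0 * P * u 0 ^ j := by
    intro j
    have hzeros : ∏ i ∈ range j, u (g (m + i)) = u 0 ^ j := by
      rw [prod_congr rfl fun i _ => by rw [hg (m + i) (by omega)], prod_const, card_range]
    rw [fSeriesTerm, hg _ (by omega), add_comm j m, prod_range_add, hzeros]
    ring
  have hu0' : 1 - u 0 ≠ 0 := by linarith [(abs_lt.1 hu0).2]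
  have hP : r 0 * P * (1 - u 0)⁻¹ = P := by rw [hr0]; field_simp
  rw [← hasSum_nat_add_iff' m, add_sub_cancel_left, funext htail]
  have hgeom := (hasSum_geometric_of_abs_lt_one hu0).mul_left (r 0 * P)
  rwa [hP] at hgeom

lemma fSeries_eq_of_eventually_zero (hr0 : r 0 = 1 - u 0) (hu0 : |u 0| < 1)
    {g : ℕ → ℕ} {m : ℕ} (hg : ∀ n, m ≤ n → g n = 0) :
    fSeries u r g = ∑ k ∈ range m, fSeriesTerm u r g k + ∏ i ∈ range m, u (g i) := by
  have h := hasSum_fSeriesTerm_of_eventually_zero hr0 hu0 hg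
  rw [fSeries_eq_tsum g h.summable, h.tsum_eq]

lemma rpred_succ (n : ℕ) : rpred r (n + 1) = r n := by
  simp [rpred]

lemma rpred_eq_add (hr : ∀ n, r n = 1 - ∑ i ∈ range (n + 1), u i) (n : ℕ) :
    rpred r n = r n + u n := by
  cases n with
  | zero => simp [rpred, hr 0]
  | succ n => rw [rpred_succ, hr n, hr (n + 1), sum_range_succ _ (n + 1)]; ring

def endpointDigits (c : ℕ → ℕ) (M d : ℕ) (n : ℕ) : ℕ :=
  if n < M then c n else if n = M then d else 0

lemma endpointDigits_self (c : ℕ → ℕ) (M : ℕ) :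
    endpointDigits c M (c M) = fun n => if n < M + 1 then c n else 0 := by
  funext n
  unfold endpointDigits
  split_ifs <;> grind

lemma fSeries_endpointDigits (hr : ∀ n, r n = 1 - ∑ i ∈ range (n + 1), u i)
    (hu0 : |u 0| < 1) (c : ℕ → ℕ) (M d : ℕ) :
    fSeries u r (endpointDigits c M d)
      = ∑ k ∈ range M, fSeriesTerm u r c k + (∏ i ∈ range M, u (c i)) * rpred r d := by
  have hagree : ∀ i < M, endpointDigits c M d i = c i := fun i hi => if_pos hi
  have hlast : endpointDigits c M d M = d := by simp [endpointDigits]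
  have hzero : ∀ n, M + 1 ≤ n → endpointDigits c M d n = 0 := fun n hn => by
    simp only [endpointDigits]; rw [if_neg (by omega), if_neg (by omega)]
  have hprod : ∏ i ∈ range M, u (endpointDigits c M d i) = ∏ i ∈ range M, u (c i) :=
    prod_congr rfl fun i hi => by rw [hagree i (mem_range.1 hi)]
  have hsum : ∑ k ∈ range M, fSeriesTerm u r (endpointDigits c M d) k
      = ∑ k ∈ range M, fSeriesTerm u r c k :=
    sum_congr rfl fun k hk => fSeriesTerm_congr fun i hi => hagree i (hi.trans_lt (mem_range.1 hk))
  rw [fSeries_eq_of_eventually_zero (by simpa using hr 0) hu0 hzero, sum_range_succ,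
    prod_range_succ, hsum, fSeriesTerm, hprod, hlast, rpred_eq_add hr]
  ring

end

theorem stmt10_general
    (u r : ℕ → ℝ)
    (hu_abs : ∀ n, |u n| < 1)
    (hr : ∀ n, r n = 1 - ∑ i ∈ Finset.range (n + 1), u i)
    (G : ℝ → ℕ → ℕ)
    (hGuniq : ∀ x ∈ Set.Ioc (0:ℝ) 1, ∀ g : ℕ → ℕ, engelSum g = x → g = G x)
    (f : ℝ → ℝ)
    (hf : ∀ x ∈ Set.Ioc (0:ℝ) 1, f x = fSeries u r (G x))
    (m : ℕ) (hm : 1 ≤ m) (c : ℕ → ℕ)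
    (bpt : ℝ) (hbpt : bpt = engelSum (fun n => if n < m then c n else 0))
    (apt : ℝ) (hapt : apt = engelSum
      (fun n => if n < m - 1 then c n else if n = m - 1 then c (m - 1) + 1 else 0)) :
    f bpt - f apt = ∏ i ∈ Finset.range m, u (c i) := by
  obtain ⟨M, rfl⟩ : ∃ M, m = M + 1 := ⟨m - 1, by omega⟩
  have hvalue : ∀ d x, x = engelSum (endpointDigits c M d) →
      f x = ∑ k ∈ range M, fSeriesTerm u r c k + (∏ i ∈ range M, u (c i)) * rpred r d := by
    rintro d x rfl
    have hx := engelSum_mem_Ioc (endpointDigits c M d)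
    rw [hf _ hx, ← hGuniq _ hx _ rfl, fSeries_endpointDigits hr (hu_abs 0)]
  rw [hvalue (c M) bpt (by rw [hbpt, endpointDigits_self]), hvalue (c M + 1) apt hapt,
    prod_range_succ, rpred_succ, rpred_eq_add hr]
  ring

/-- the change of f over the cylinder Δ^E_{c₁…c_m}
(value at the right endpoint minus value at the left endpoint) equals ∏_{i=1}^m u_{c_i}. -/
theorem stmt10
    (u r : ℕ → ℝ)
    (hu_sum : HasSum u 1)
    (hu_abs : ∀ n, |u n| < 1)
    (hr : ∀ n, r n = 1 - ∑ i ∈ Finset.range (n + 1), u i)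
    (hr01 : ∀ n, 0 < r n ∧ r n < 1)
    (G : ℝ → ℕ → ℕ)
    (hG : ∀ x ∈ Set.Ioc (0:ℝ) 1, engelSum (G x) = x)
    (hGuniq : ∀ x ∈ Set.Ioc (0:ℝ) 1, ∀ g : ℕ → ℕ, engelSum g = x → g = G x)
    (f : ℝ → ℝ)
    (hf : ∀ x ∈ Set.Ioc (0:ℝ) 1, f x = fSeries u r (G x))
    (hf0 : f 0 = 0)
    (m : ℕ) (hm : 1 ≤ m) (c : ℕ → ℕ)
    (bpt : ℝ) (hbpt : bpt = engelSum (fun n => if n < m then c n else 0))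
    (apt : ℝ) (hapt : apt = engelSum
      (fun n => if n < m - 1 then c n else if n = m - 1 then c (m - 1) + 1 else 0)) :
    f bpt - f apt = ∏ i ∈ Finset.range m, u (c i) :=
  stmt10_general u r hu_abs hr G hGuniq f hf m hm c bpt hbpt apt hapt
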